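/- arXiv:2304.00516 — 10 statements merged into one kernel-verified Lean document; each statement's English description precedes it below -/
import Mathlib

section
/- If G is a non-discrete, torsion-free locally compact abelian group, then the OP subgroup G_op of G is nonzero, i.e. G_op ≠ {0}. -/
/-- A subgroup `H` of an abelian group `G` is *pure* if `nH = H ∩ nG` for every positive `n`. -/
def IsPureSubgroup {G : Type*} [AddCommGroup G] (H : AddSubgroup G) : Prop :=
  ∀ n : ℕ, 0 < n →
    (fun x => n • x) '' (H : Set G) = (H : Set G) ∩ ((fun x => n • x) '' (Set.univ : Set G))

/-- A subgroup `K ≤ H` is *pure in `H`* if `nK = K ∩ nH` for every positive `n`. -/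
def IsPureIn {G : Type*} [AddCommGroup G] (K H : AddSubgroup G) : Prop :=
  ∀ n : ℕ, 0 < n →
    (fun x => n • x) '' (K : Set G) = (K : Set G) ∩ ((fun x => n • x) '' (H : Set G))

/-- The OP subgroup of `G`: the intersection of all open pure subgroups of `G`. -/
def opSubgroup (G : Type*) [AddCommGroup G] [TopologicalSpace G] : AddSubgroup G :=
  ⨅ H ∈ {H : AddSubgroup G | IsOpen (H : Set G) ∧ IsPureSubgroup H}, H

/-- The OP subgroup of a subgroup `H` of `G` (with the subspace topology), regarded as a
subgroup of `G`: the intersection of all `K ≤ H` that are open in `H` and pure in `H`. -/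
def opSubgroupIn {G : Type*} [AddCommGroup G] [TopologicalSpace G]
    (H : AddSubgroup G) : AddSubgroup G :=
  ⨅ K ∈ {K : AddSubgroup G | K ≤ H ∧
      IsOpen (((↑) : H → G) ⁻¹' (K : Set G)) ∧ IsPureIn K H}, K

open Set in
/-- van Dantzig for LCA groups: a totally disconnected locally compact Hausdorff abelian
topological group has a compact open subgroup. -/
lemma exists_compact_open_addSubgroup (G : Type*) [AddCommGroup G]
    [TopologicalSpace G] [IsTopologicalAddGroup G] [LocallyCompactSpace G] [T2Space G]
    [TotallyDisconnectedSpace G] :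
    ∃ S : AddSubgroup G, IsOpen (S : Set G) ∧ IsCompact (S : Set G) := by
  obtain ⟨C, Ccomp, hC⟩ := exists_compact_mem_nhds (0 : G)
  have hint : (0 : G) ∈ interior C := mem_interior_iff_mem_nhds.mpr hC
  obtain ⟨W, hWclopen, hW0, hWsub⟩ :=
    loc_compact_Haus_tot_disc_of_zero_dim.exists_subset_of_mem_open hint isOpen_interior
  have hWclopen : IsClopen W := hWclopen
  have Wcomp : IsCompact W :=
    Ccomp.of_isClosed_subset hWclopen.isClosed (hWsub.trans interior_subset)
  -- for every point `w` of `W` find open `U ∋ w`, `V ∋ 0` with `U + V ⊆ W`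
  have key : ∀ w : G, ∃ U : Set G, ∃ V : Set G, IsOpen U ∧ IsOpen V ∧ (0 : G) ∈ V ∧
      (w ∈ W → w ∈ U ∧ ∀ a ∈ U, ∀ b ∈ V, a + b ∈ W) := by
    intro w
    by_cases hw : w ∈ W
    · have hpre : ((w, (0 : G)) : G × G) ∈ (fun p : G × G => p.1 + p.2) ⁻¹' W := by
        simpa using hw
      obtain ⟨U, V, hU, hV, hwU, h0V, hsub⟩ :=
        isOpen_prod_iff.mp (continuous_add.isOpen_preimage W hWclopen.2) w 0 hpre
      exact ⟨U, V, hU, hV, h0V, fun _ => ⟨hwU, fun a ha b hb => hsub (mk_mem_prod ha hb)⟩⟩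
    · exact ⟨∅, univ, isOpen_empty, isOpen_univ, mem_univ _, fun h => absurd h hw⟩
  choose U V hU hV h0V hmem using key
  obtain ⟨t, htW, hcover⟩ := Wcomp.elim_nhds_subcover U
    (fun w hw => (hU w).mem_nhds (hmem w hw).1)
  set T : Set G := ⋂ w ∈ t, V w with hT
  have hTopen : IsOpen T := isOpen_biInter_finset (fun w _ => hV w)
  have h0T : (0 : G) ∈ T := mem_iInter₂.mpr fun w _ => h0V w
  have hWT : ∀ a ∈ W, ∀ b ∈ T, a + b ∈ W := by
    intro a ha b hb
    obtain ⟨w, hwt, haU⟩ := mem_iUnion₂.mp (hcover ha)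
    exact (hmem w (htW w hwt)).2 a haU b (mem_iInter₂.mp hb w hwt)
  refine ⟨{ carrier := {x | (∀ w ∈ W, w + x ∈ W) ∧ (∀ w ∈ W, w + -x ∈ W)}
            zero_mem' := by simp
            add_mem' := ?_
            neg_mem' := ?_ }, ?_, ?_⟩
  · rintro x y ⟨hx1, hx2⟩ ⟨hy1, hy2⟩
    constructor
    · intro w hw
      have h := hy1 _ (hx1 w hw)
      have e : w + x + y = w + (x + y) := by abel
      rwa [e] at h
    · intro w hw
      have h := hx2 _ (hy2 w hw)
      have e : w + -y + -x = w + -(x + y) := by abel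
      rwa [e] at h
  · rintro x ⟨h1, h2⟩
    refine ⟨h2, ?_⟩
    simpa using h1
  · apply AddSubgroup.isOpen_of_mem_nhds
    refine Filter.mem_of_superset
      ((hTopen.inter (hTopen.preimage continuous_neg)).mem_nhds ⟨h0T, by simpa using h0T⟩) ?_
    rintro x ⟨hx, hnx⟩
    exact ⟨fun w hw => hWT w hw x hx, fun w hw => hWT w hw (-x) hnx⟩
  · refine Wcomp.of_isClosed_subset ?_ ?_
    · exact AddSubgroup.isClosed_of_isOpen _ (by
        apply AddSubgroup.isOpen_of_mem_nhds
        refine Filter.mem_of_superset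
          ((hTopen.inter (hTopen.preimage continuous_neg)).mem_nhds ⟨h0T, by simpa using h0T⟩) ?_
        rintro x ⟨hx, hnx⟩
        exact ⟨fun w hw => hWT w hw x hx, fun w hw => hWT w hw (-x) hnx⟩)
    · rintro x ⟨h1, -⟩
      simpa using h1 0 hW0

/-- If `G` is a non-discrete, torsion-free locally compact abelian group, then the OP
subgroup `G_op` of `G` is nonzero. -/
theorem opSubgroup_ne_bot_of_nondiscrete_torsionFree (G : Type*) [AddCommGroup G]
    [TopologicalSpace G] [IsTopologicalAddGroup G] [LocallyCompactSpace G] [T2Space G]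
    (hnd : ¬ DiscreteTopology G)
    (htf : ∀ (n : ℕ) (x : G), 0 < n → n • x = 0 → x = 0) :
    opSubgroup G ≠ ⊥ := by
  have main : ∃ x : G, x ≠ 0 ∧
      ∀ H : AddSubgroup G, IsOpen (H : Set G) → IsPureSubgroup H → x ∈ H := by
    by_cases hcc : connectedComponent (0 : G) = {0}
    · -- totally disconnected case
      have htd : TotallyDisconnectedSpace G := by
        rw [totallyDisconnectedSpace_iff_connectedComponent_singleton]
        intro x
        refine Set.eq_singleton_iff_unique_mem.mpr ⟨mem_connectedComponent, fun y hy => ?_⟩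
        have h1 : y - x ∈ connectedComponent (x - x) :=
          (continuous_id.sub continuous_const).image_connectedComponent_subset x ⟨y, hy, rfl⟩
        rw [sub_self, hcc, Set.mem_singleton_iff, sub_eq_zero] at h1
        exact h1
      obtain ⟨S, hSopen, hScomp⟩ := exists_compact_open_addSubgroup G
      have hSne : ∃ x ∈ S, x ≠ (0 : G) := by
        by_contra h
        push_neg at h
        apply hnd
        rw [discreteTopology_iff_isOpen_singleton_zero]
        have hS0 : (S : Set G) = {0} := by
          ext y
          simp only [Set.mem_singleton_iff]
          exact ⟨fun hy => h y hy, fun hy => hy ▸ S.zero_mem⟩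
        exact hS0 ▸ hSopen
      obtain ⟨x, hxS, hx0⟩ := hSne
      refine ⟨x, hx0, fun H hHopen hHpure => ?_⟩
      have : CompactSpace S := isCompact_iff_compactSpace.mp hScomp
      set J : AddSubgroup S := H.addSubgroupOf S with hJ
      have hJopen : IsOpen (J : Set S) := by
        have h2 : (J : Set S) = ((↑) : S → G) ⁻¹' H := rfl
        rw [h2]
        exact hHopen.preimage continuous_subtype_val
      have hfin : Finite (S ⧸ J) := AddSubgroup.quotient_finite_of_isOpen J hJopen
      set n := Nat.card (S ⧸ J) with hn
      have hnpos : 0 < n := Nat.card_pos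
      have hnx : n • x ∈ H := by
        have h3 : (QuotientAddGroup.mk' J) (n • (⟨x, hxS⟩ : S)) = 0 := by
          rw [map_nsmul]
          exact card_nsmul_eq_zero'
        have h4 : n • (⟨x, hxS⟩ : S) ∈ J :=
          (QuotientAddGroup.eq_zero_iff _).mp h3
        have h5 : ((n • (⟨x, hxS⟩ : S) : S) : G) ∈ H := h4
        simpa using h5
      have hmem2 : n • x ∈ (fun y : G => n • y) '' (H : Set G) := by
        rw [hHpure n hnpos]
        exact ⟨hnx, ⟨x, Set.mem_univ x, rfl⟩⟩
      obtain ⟨h, hhH, hh⟩ := hmem2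
      have hxh : h - x = 0 := htf n (h - x) hnpos
        (by rw [smul_sub, show n • h = n • x from hh, sub_self])
      have : x = h := (sub_eq_zero.mp hxh).symm
      rwa [this]
    · -- nontrivial connected component
      have hex : ∃ y ∈ connectedComponent (0 : G), y ≠ 0 := by
        by_contra h
        push_neg at h
        exact hcc (subset_antisymm (fun y hy => h y hy)
          (Set.singleton_subset_iff.mpr mem_connectedComponent))
      obtain ⟨x, hxc, hx0⟩ := hex
      exact ⟨x, hx0, fun H hHopen _ =>
        (IsClopen.connectedComponent_subset ⟨H.isClosed_of_isOpen hHopen, hHopen⟩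
          H.zero_mem) hxc⟩
  obtain ⟨x, hx0, hxall⟩ := main
  intro hbot
  apply hx0
  have hxop : x ∈ opSubgroup G := by
    rw [opSubgroup]
    simp only [AddSubgroup.mem_iInf, Set.mem_setOf_eq]
    exact fun H hH => hxall H hH.1 hH.2
  rw [hbot] at hxop
  exact AddSubgroup.mem_bot.mp hxop
end

section
/- If G is a torsion-free locally compact abelian group, then the OP subgroup G_op is a pure subgroup of G, i.e. n·G_op = G_op ∩ nG for every positive integer n. -/
/-- If `G` is a torsion-free locally compact abelian group, then the OP subgroup `G_op`
is a pure subgroup of `G`, i.e. `n • G_op = G_op ∩ n • G` for every positive `n`. -/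
theorem isPureSubgroup_opSubgroup_of_torsionFree (G : Type*) [AddCommGroup G]
    [TopologicalSpace G] [IsTopologicalAddGroup G] [LocallyCompactSpace G] [T2Space G]
    (htf : ∀ (n : ℕ) (x : G), 0 < n → n • x = 0 → x = 0) :
    IsPureSubgroup (opSubgroup G) := by
  intro n hn
  ext y
  constructor
  · rintro ⟨x, hx, rfl⟩
    exact ⟨AddSubgroup.nsmul_mem _ hx n, ⟨x, trivial, rfl⟩⟩
  · rintro ⟨hy, x, -, rfl⟩
    refine ⟨x, ?_, rfl⟩
    have hy' : n • x ∈ opSubgroup G := hy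
    refine AddSubgroup.mem_iInf.mpr fun H => AddSubgroup.mem_iInf.mpr fun hH => ?_
    have hyH : n • x ∈ H :=
      AddSubgroup.mem_iInf.mp (AddSubgroup.mem_iInf.mp hy' H) hH
    obtain ⟨-, hpure⟩ := hH
    have hmem : (n • x) ∈ (fun z : G => n • z) '' (H : Set G) := by
      rw [hpure n hn]
      exact ⟨hyH, ⟨x, trivial, rfl⟩⟩
    obtain ⟨h, hh, heq⟩ := hmem
    have hx : x = h := by
      have := htf n (x - h) hn (by simp only at heq; rw [smul_sub, heq, sub_self])
      exact sub_eq_zero.mp this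
    rwa [hx]
end

section
/- Let G be a locally compact abelian group and H an open pure subgroup of G. Then G_op is contained in H_op, where H_op denotes the intersection of all subgroups K of G with K ≤ H such that K is open (in H, equivalently in G) and K is a pure subgroup of H. -/
/-- If `H` is an open pure subgroup of a locally compact abelian group `G`, then
`G_op ⊆ H_op`. -/
theorem opSubgroup_le_opSubgroupIn (G : Type*) [AddCommGroup G]
    [TopologicalSpace G] [IsTopologicalAddGroup G] [LocallyCompactSpace G] [T2Space G]
    (H : AddSubgroup G) (hHo : IsOpen (H : Set G)) (hHp : IsPureSubgroup H) :
    opSubgroup G ≤ opSubgroupIn H := by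
  refine le_iInf₂ fun K hK => ?_
  obtain ⟨hKH, hKo, hKp⟩ := hK
  refine iInf₂_le K ⟨?_, ?_⟩
  · -- K is open in G
    have : Subtype.val '' (((↑) : H → G) ⁻¹' (K : Set G)) = (K : Set G) := by
      rw [Set.image_preimage_eq_inter_range, Subtype.range_coe]
      exact Set.inter_eq_left.mpr hKH
    rw [← this]
    exact hHo.isOpenMap_subtype_val _ hKo
  · -- K is pure in G
    intro n hn
    ext x
    constructor
    · rintro ⟨y, hy, rfl⟩
      exact ⟨by
        have := (hKp n hn).le ⟨y, hy, rfl⟩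
        exact this.1, ⟨y, Set.mem_univ y, rfl⟩⟩
    · rintro ⟨hxK, y, -, rfl⟩
      have hxH : (n • y) ∈ (H : Set G) := hKH hxK
      have : (n • y) ∈ (fun x => n • x) '' (H : Set G) := by
        rw [hHp n hn]; exact ⟨hxH, y, Set.mem_univ y, rfl⟩
      rw [hKp n hn]
      exact ⟨hxK, this⟩
end

section
/- Let G be a torsion-free locally compact abelian group and H an open pure subgroup of G. Then G_op = H_op, where H_op denotes the intersection of all subgroups K of G with K ≤ H such that K is open (in H, equivalently in G) and K is a pure subgroup of H. -/
section Aux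

variable {G : Type*} [AddCommGroup G]

lemma isPureIn_iff (htf : ∀ (n : ℕ) (x : G), 0 < n → n • x = 0 → x = 0)
    (K H : AddSubgroup G) (hKH : K ≤ H) :
    IsPureIn K H ↔ ∀ n : ℕ, 0 < n → ∀ h : G, h ∈ H → n • h ∈ K → h ∈ K := by
  constructor
  · intro hp n hn h hh hnh
    have hmem : n • h ∈ (K : Set G) ∩ ((fun x => n • x) '' (H : Set G)) :=
      ⟨hnh, ⟨h, hh, rfl⟩⟩
    rw [← hp n hn] at hmem
    obtain ⟨k, hk, hk2⟩ := hmem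
    have : k - h = 0 := htf n _ hn (by simpa [smul_sub] using congrArg (· - n • h) hk2)
    rw [← sub_eq_zero.mp this]; exact hk
  · intro hcl n hn
    ext x
    constructor
    · rintro ⟨k, hk, rfl⟩
      exact ⟨K.nsmul_mem hk n, ⟨k, hKH hk, rfl⟩⟩
    · rintro ⟨hxK, ⟨h, hh, rfl⟩⟩
      exact ⟨h, hcl n hn h hh hxK, rfl⟩

lemma isPureSubgroup_iff (htf : ∀ (n : ℕ) (x : G), 0 < n → n • x = 0 → x = 0)
    (K : AddSubgroup G) :
    IsPureSubgroup K ↔ ∀ n : ℕ, 0 < n → ∀ g : G, n • g ∈ K → g ∈ K := by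
  have := isPureIn_iff htf K ⊤ le_top
  simp only [IsPureIn, IsPureSubgroup, AddSubgroup.coe_top] at this ⊢
  rw [this]
  simp [AddSubgroup.mem_top]

end Aux

/-- If `G` is a torsion-free locally compact abelian group and `H` is an open pure
subgroup of `G`, then `G_op = H_op`. -/
theorem opSubgroup_eq_opSubgroupIn_of_torsionFree (G : Type*) [AddCommGroup G]
    [TopologicalSpace G] [IsTopologicalAddGroup G] [LocallyCompactSpace G] [T2Space G]
    (htf : ∀ (n : ℕ) (x : G), 0 < n → n • x = 0 → x = 0)
    (H : AddSubgroup G) (hHo : IsOpen (H : Set G)) (hHp : IsPureSubgroup H) :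
    opSubgroup G = opSubgroupIn H := by
  rw [isPureSubgroup_iff htf] at hHp
  apply le_antisymm
  · -- opSubgroup G ≤ opSubgroupIn H
    refine le_iInf fun K => le_iInf fun hK => ?_
    obtain ⟨hKH, hKopen, hKpure⟩ := hK
    have hKopenG : IsOpen (K : Set G) := by
      have h1 := hHo.isOpenEmbedding_subtypeVal.isOpenMap _ hKopen
      have h2 : ((↑) : H → G) '' (((↑) : H → G) ⁻¹' (K : Set G)) = (K : Set G) := by
        ext x
        constructor
        · rintro ⟨y, hy, rfl⟩
          exact hy
        · intro hx
          exact ⟨⟨x, hKH hx⟩, hx, rfl⟩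
      exact h2 ▸ h1
    have hKpureG : IsPureSubgroup K := by
      rw [isPureSubgroup_iff htf]
      rw [isPureIn_iff htf K H hKH] at hKpure
      intro n hn g hng
      have hgH : g ∈ H := hHp n hn g (hKH hng)
      exact hKpure n hn g hgH hng
    exact iInf_le_of_le K (iInf_le_of_le ⟨hKopenG, hKpureG⟩ le_rfl)
  · -- opSubgroupIn H ≤ opSubgroup G
    refine le_iInf fun K => le_iInf fun hK => ?_
    obtain ⟨hKo, hKp⟩ := hK
    rw [isPureSubgroup_iff htf] at hKp
    have hmem : (K ⊓ H) ∈ {K : AddSubgroup G | K ≤ H ∧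
        IsOpen (((↑) : H → G) ⁻¹' ((K : AddSubgroup G) : Set G)) ∧ IsPureIn K H} := by
      refine ⟨inf_le_right, ?_, ?_⟩
      · have : ((K ⊓ H : AddSubgroup G) : Set G) = (K : Set G) ∩ (H : Set G) := rfl
        rw [this]
        exact (hKo.inter hHo).preimage continuous_subtype_val
      · rw [isPureIn_iff htf _ H inf_le_right]
        intro n hn h hh hnh
        exact ⟨hKp n hn h hnh.1, hh⟩
    exact le_trans (iInf_le_of_le (K ⊓ H) (iInf_le_of_le hmem le_rfl)) inf_le_left
end

section
/- Let G and H be locally compact abelian groups with H torsion-free, and let f : G → H be a continuous group homomorphism. Then f(G_op) ⊆ H_op, i.e. the image under f of the intersection of all open pure subgroups of G is contained in the intersection of all open pure subgroups of H. -/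
/-- If `f : G → H` is a continuous homomorphism of locally compact abelian groups and
`H` is torsion-free, then `f(G_op) ⊆ H_op`. -/
theorem map_opSubgroup_le_opSubgroup (G H : Type*) [AddCommGroup G]
    [TopologicalSpace G] [IsTopologicalAddGroup G] [LocallyCompactSpace G] [T2Space G]
    [AddCommGroup H] [TopologicalSpace H] [IsTopologicalAddGroup H]
    [LocallyCompactSpace H] [T2Space H]
    (htf : ∀ (n : ℕ) (x : H), 0 < n → n • x = 0 → x = 0)
    (f : G →+ H) (hf : Continuous f) :
    (opSubgroup G).map f ≤ opSubgroup H := by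
  refine le_iInf₂ fun K hK => ?_
  obtain ⟨hopen, hpure⟩ := hK
  -- In a torsion-free group, pure subgroups are divisor-closed
  have hdiv : ∀ (n : ℕ) (x : H), 0 < n → n • x ∈ K → x ∈ K := by
    intro n x hn hx
    have : (n • x) ∈ (fun y => n • y) '' (K : Set H) := by
      rw [hpure n hn]
      exact ⟨hx, ⟨x, Set.mem_univ x, rfl⟩⟩
    obtain ⟨k, hk, hnk⟩ := this
    simp only at hnk
    have : n • (x - k) = 0 := by
      rw [smul_sub, hnk, sub_self]
    have hxk : x = k := sub_eq_zero.mp (htf n (x - k) hn this)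
    exact hxk ▸ hk
  rw [AddSubgroup.map_le_iff_le_comap]
  refine iInf₂_le (K.comap f) ⟨?_, ?_⟩
  · exact hopen.preimage hf
  · intro n hn
    ext y
    constructor
    · rintro ⟨x, hx, rfl⟩
      exact ⟨AddSubgroup.nsmul_mem _ hx n, ⟨x, Set.mem_univ x, rfl⟩⟩
    · rintro ⟨hy, x, -, rfl⟩
      have hfx : f x ∈ K := by
        apply hdiv n (f x) hn
        have : f (n • x) ∈ K := hy
        rwa [map_nsmul] at this
      exact ⟨x, hfx, rfl⟩
end

section
/- Let D be a torsion-free divisible locally compact abelian group and let G be an open subgroup of D, which is itself torsion-free. Then G_op (the intersection of all subgroups of D contained in G that are open and pure in G, with G carrying the subspace topology) is contained in D_op, the intersection of all open pure subgroups of D. -/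
set_option maxHeartbeats 1000000


/-- Let `D` be a torsion-free divisible locally compact abelian group and `G` an open
subgroup of `D`, itself torsion-free. Then `G_op ⊆ D_op`. -/
theorem opSubgroupIn_le_opSubgroup (D : Type*) [AddCommGroup D]
    [TopologicalSpace D] [IsTopologicalAddGroup D] [LocallyCompactSpace D] [T2Space D]
    (htf : ∀ (n : ℕ) (x : D), 0 < n → n • x = 0 → x = 0)
    (hdiv : ∀ (x : D) (n : ℕ), 0 < n → ∃ y : D, n • y = x)
    (G : AddSubgroup D) (hGo : IsOpen (G : Set D))
    (hGtf : ∀ (n : ℕ) (x : G), 0 < n → n • x = 0 → x = 0) :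
    opSubgroupIn G ≤ opSubgroup D := by
  intro x hx
  simp only [opSubgroupIn, opSubgroup, AddSubgroup.mem_iInf, Set.mem_setOf_eq] at hx ⊢
  intro H hH
  obtain ⟨hHo, hHp⟩ := hH
  -- H is divisible: n • H = H
  have hHdiv : ∀ n : ℕ, 0 < n → (fun x : D => n • x) '' (H : Set D) = (H : Set D) := by
    intro n hn
    have huniv : (fun x : D => n • x) '' (Set.univ : Set D) = Set.univ := by
      apply Set.eq_univ_of_forall
      intro x
      obtain ⟨y, hy⟩ := hdiv x n hn
      exact ⟨y, trivial, hy⟩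
    rw [hHp n hn, huniv, Set.inter_univ]
  have hmem : (H ⊓ G) ∈ {K : AddSubgroup D | K ≤ G ∧
      IsOpen (((↑) : G → D) ⁻¹' ((H ⊓ G : AddSubgroup D) : Set D)) ∧ IsPureIn (H ⊓ G) G} := by
    refine ⟨inf_le_right, ?_, ?_⟩
    · exact (hHo.inter hGo).preimage continuous_subtype_val
    · intro n hn
      ext x
      constructor
      · rintro ⟨y, ⟨hyH, hyG⟩, rfl⟩
        exact ⟨⟨H.nsmul_mem hyH n, G.nsmul_mem hyG n⟩, y, hyG, rfl⟩
      · rintro ⟨⟨hxH, hxG⟩, y, hyG, rfl⟩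
        have : (n • y : D) ∈ (fun x : D => n • x) '' (H : Set D) := by
          rw [hHdiv n hn]; exact hxH
        obtain ⟨h, hhH, hh⟩ := this
        have hyH : y ∈ H := by
          have : h = y := by
            have : n • (h - y) = 0 := by
              simpa [smul_sub, sub_eq_zero] using hh
            have := htf n (h - y) hn this
            exact sub_eq_zero.mp this
          rwa [← this]
        exact ⟨y, ⟨hyH, hyG⟩, rfl⟩
  exact (hx (H ⊓ G) hmem).1
end

section
/- Let D be a torsion-free divisible locally compact abelian group and G an open subgroup of D such that every divisible subgroup of D containing G equals D (i.e. D is a minimal divisible extension of G). If G_op = G (every open pure subgroup of G, with G carrying the subspace topology, equals G), then D_op = D, i.e. the intersection of all open pure subgroups of D is all of D. -/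
/-- Let `D` be a torsion-free divisible locally compact abelian group and `G` an open
subgroup of `D` such that every divisible subgroup of `D` containing `G` equals `D`
(i.e. `D` is a minimal divisible extension of `G`). If `G_op = G`, then `D_op = D`. -/
theorem opSubgroup_eq_top_of_minimal_divisible_extension (D : Type*) [AddCommGroup D]
    [TopologicalSpace D] [IsTopologicalAddGroup D] [LocallyCompactSpace D] [T2Space D]
    (htf : ∀ (n : ℕ) (x : D), 0 < n → n • x = 0 → x = 0)
    (hdiv : ∀ (x : D) (n : ℕ), 0 < n → ∃ y : D, n • y = x)
    (G : AddSubgroup D) (hGo : IsOpen (G : Set D))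
    (hmin : ∀ E : AddSubgroup D, G ≤ E →
      (∀ x ∈ E, ∀ n : ℕ, 0 < n → ∃ y ∈ E, n • y = x) → E = ⊤)
    (hGop : opSubgroupIn G = G) :
    opSubgroup D = ⊤ := by
  rw [opSubgroup, eq_top_iff]
  refine le_iInf₂ fun H hH => ?_
  obtain ⟨hHo, hHp⟩ := hH
  -- H is divisible in itself
  have hHdiv : ∀ x ∈ H, ∀ n : ℕ, 0 < n → ∃ y ∈ H, n • y = x := by
    intro x hx n hn
    obtain ⟨y, hy⟩ := hdiv x n hn
    have hx' : x ∈ (fun z => n • z) '' (H : Set D) := by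
      rw [hHp n hn]
      exact ⟨hx, ⟨y, Set.mem_univ y, hy⟩⟩
    obtain ⟨z, hz, hzx⟩ := hx'
    exact ⟨z, hz, hzx⟩
  -- K = H ⊓ G is open in G and pure in G
  have hK1 : H ⊓ G ≤ G := inf_le_right
  have hK2 : IsOpen (((↑) : G → D) ⁻¹' ((H ⊓ G : AddSubgroup D) : Set D)) := by
    exact (hHo.inter hGo).preimage continuous_subtype_val
  have hK3 : IsPureIn (H ⊓ G) G := by
    intro n hn
    apply Set.Subset.antisymm
    · rintro _ ⟨z, hz, rfl⟩
      exact ⟨AddSubgroup.nsmul_mem _ hz n, ⟨z, hz.2, rfl⟩⟩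
    · rintro x ⟨hxK, y, hyG, rfl⟩
      obtain ⟨z, hz, hzx⟩ := hHdiv _ hxK.1 n hn
      have : z = y := by
        have h0 : n • (z - y) = 0 := by rw [smul_sub, hzx, sub_self]
        exact sub_eq_zero.mp (htf n (z - y) hn h0)
      exact ⟨y, ⟨this ▸ hz, hyG⟩, rfl⟩
  -- so G ≤ H ⊓ G by hGop
  have hle : opSubgroupIn G ≤ H ⊓ G := iInf₂_le _ ⟨hK1, hK2, hK3⟩
  rw [hGop] at hle
  have hGH : G ≤ H := hle.trans inf_le_left
  exact (hmin H hGH hHdiv).ge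
end

section
/- If G is a torsion-free divisible locally compact abelian group, then its OP subgroup G_op (the intersection of all open pure subgroups of G) is a divisible subgroup of G. -/
/-- If `G` is a torsion-free divisible locally compact abelian group, then its OP
subgroup `G_op` is a divisible subgroup of `G`. -/
theorem opSubgroup_divisible (G : Type*) [AddCommGroup G]
    [TopologicalSpace G] [IsTopologicalAddGroup G] [LocallyCompactSpace G] [T2Space G]
    (htf : ∀ (n : ℕ) (x : G), 0 < n → n • x = 0 → x = 0)
    (hdiv : ∀ (x : G) (n : ℕ), 0 < n → ∃ y : G, n • y = x) :
    ∀ x ∈ opSubgroup G, ∀ n : ℕ, 0 < n → ∃ y ∈ opSubgroup G, n • y = x := by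
  intro x hx n hn
  obtain ⟨y, hy⟩ := hdiv x n hn
  refine ⟨y, ?_, hy⟩
  simp only [opSubgroup, AddSubgroup.mem_iInf] at hx ⊢
  intro H hH
  have hxH : x ∈ H := hx H hH
  have hpure := hH.2 n hn
  have hxmem : x ∈ (H : Set G) ∩ ((fun z => n • z) '' (Set.univ : Set G)) :=
    ⟨hxH, ⟨y, Set.mem_univ y, hy⟩⟩
  rw [← hpure] at hxmem
  obtain ⟨h, hhH, hhx0⟩ := hxmem
  have hhx : n • h = x := hhx0
  have : y = h := by
    have : n • (y - h) = 0 := by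
      rw [smul_sub, hhx, hy, sub_self]
    have := htf n (y - h) hn this
    exact sub_eq_zero.mp this
  rwa [this]
end

section
/- Let K denote the Pontryagin dual of the discrete abelian group ℚ/ℤ (the group of continuous homomorphisms from discrete ℚ/ℤ to the circle group, with the compact-open topology). Then K_op = K, i.e. the intersection of all open pure subgroups of K is all of K. -/
/-- The discrete group `ℚ/ℤ`. -/
def QZ : Type := ℚ ⧸ AddSubgroup.zmultiples (1 : ℚ)
instance : AddCommGroup QZ :=
  inferInstanceAs (AddCommGroup (ℚ ⧸ AddSubgroup.zmultiples (1 : ℚ)))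
instance : TopologicalSpace QZ := ⊥
instance : DiscreteTopology QZ := ⟨rfl⟩
instance : IsTopologicalAddGroup QZ where
  continuous_add := continuous_of_discreteTopology
  continuous_neg := continuous_of_discreteTopology

/-- The Pontryagin dual of the discrete group `ℚ/ℤ`: the group of continuous
homomorphisms to the circle group `ℝ/ℤ`, with the compact-open topology. -/
def K : Type := ContinuousAddMonoidHom QZ (AddCircle (1 : ℝ))
noncomputable instance : AddCommGroup K :=
  inferInstanceAs (AddCommGroup (ContinuousAddMonoidHom QZ (AddCircle (1 : ℝ))))
noncomputable instance : TopologicalSpace K :=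
  inferInstanceAs (TopologicalSpace (ContinuousAddMonoidHom QZ (AddCircle (1 : ℝ))))


section Aux

open Filter Topology

noncomputable instance : FunLike K QZ (AddCircle (1 : ℝ)) :=
  inferInstanceAs (FunLike (ContinuousAddMonoidHom QZ (AddCircle (1 : ℝ))) QZ (AddCircle (1 : ℝ)))
noncomputable instance : AddMonoidHomClass K QZ (AddCircle (1 : ℝ)) :=
  inferInstanceAs (AddMonoidHomClass (ContinuousAddMonoidHom QZ (AddCircle (1 : ℝ))) QZ
    (AddCircle (1 : ℝ)))
instance : IsTopologicalAddGroup K :=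
  inferInstanceAs (IsTopologicalAddGroup (ContinuousAddMonoidHom QZ (AddCircle (1 : ℝ))))

lemma K_add_apply (φ ψ : K) (x : QZ) : (φ + ψ) x = φ x + ψ x := rfl
lemma K_zero_apply (x : QZ) : (0 : K) x = 0 := rfl

lemma K_nsmul_apply (n : ℕ) (φ : K) (x : QZ) : (n • φ) x = n • (φ x) := by
  induction n with
  | zero => simp [K_zero_apply]
  | succ k ih => rw [succ_nsmul, succ_nsmul, K_add_apply, ih]

/-- `ℚ/ℤ` is divisible. -/
lemma QZ_div (n : ℕ) (hn : 0 < n) (x : QZ) : ∃ y : QZ, n • y = x := by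
  have : ∀ z : ℚ ⧸ AddSubgroup.zmultiples (1 : ℚ),
      ∃ y : ℚ ⧸ AddSubgroup.zmultiples (1 : ℚ), n • y = z := by
    intro z
    obtain ⟨q, rfl⟩ := QuotientAddGroup.mk_surjective z
    refine ⟨QuotientAddGroup.mk' _ ((n : ℚ)⁻¹ * q), ?_⟩
    rw [← map_nsmul]
    show QuotientAddGroup.mk _ = _
    congr 1
    rw [nsmul_eq_mul, ← mul_assoc, mul_inv_cancel₀ (by positivity), one_mul]
  exact this x

/-- `ℚ/ℤ` is torsion. -/
lemma QZ_tors (x : QZ) : ∃ m : ℕ, 0 < m ∧ m • x = 0 := by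
  have : ∀ z : ℚ ⧸ AddSubgroup.zmultiples (1 : ℚ), ∃ m : ℕ, 0 < m ∧ m • z = 0 := by
    intro z
    obtain ⟨q, rfl⟩ := QuotientAddGroup.mk_surjective z
    refine ⟨q.den, q.pos, ?_⟩
    have h : (q.den : ℕ) • (QuotientAddGroup.mk q : ℚ ⧸ AddSubgroup.zmultiples (1 : ℚ))
        = QuotientAddGroup.mk (q.den • q) := (map_nsmul (QuotientAddGroup.mk' _) _ _).symm
    rw [h, QuotientAddGroup.eq_zero_iff]
    refine AddSubgroup.mem_zmultiples_iff.2 ⟨q.num, ?_⟩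
    rw [zsmul_eq_mul, mul_one, nsmul_eq_mul, Rat.den_mul_eq_num]
  exact this x

/-- `K` is torsion-free. -/
lemma K_torsionFree {n : ℕ} (hn : 0 < n) {φ : K} (h : n • φ = 0) : φ = 0 := by
  apply DFunLike.ext
  intro x
  obtain ⟨y, hy⟩ := QZ_div n hn x
  rw [K_zero_apply, ← hy, map_nsmul, ← K_nsmul_apply, h, K_zero_apply]

lemma tendsto_factorial_smul (φ : K) :
    Tendsto (fun n : ℕ => (n.factorial) • φ) atTop (𝓝 (0 : K)) := by
  refine (ContinuousAddMonoidHom.isInducing_toContinuousMap QZ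
    (AddCircle (1 : ℝ))).tendsto_nhds_iff.2 ?_
  rw [ContinuousMap.tendsto_nhds_compactOpen]
  intro C hC U hU h0
  have hfin : C.Finite := hC.finite_of_discrete
  show ∀ᶠ n : ℕ in atTop, ∀ x ∈ C, ((n.factorial • φ : K) : QZ → AddCircle (1 : ℝ)) x ∈ U
  have key : ∀ x ∈ C, ∀ᶠ n : ℕ in atTop, ((n.factorial • φ : K) : QZ → AddCircle (1 : ℝ)) x ∈ U := by
    intro x hx
    obtain ⟨m, hm, hmx⟩ := QZ_tors x
    filter_upwards [eventually_ge_atTop m] with n hn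
    have hdvd : m ∣ n.factorial := Nat.dvd_factorial hm hn
    obtain ⟨c, hc⟩ := hdvd
    have : (n.factorial • φ : K) x = 0 := by
      rw [K_nsmul_apply, ← map_nsmul, hc, mul_nsmul, hmx, smul_zero, map_zero]
    rw [this]
    have h0' : ((0 : K) : QZ → AddCircle (1 : ℝ)) x ∈ U := h0 hx
    rwa [K_zero_apply] at h0'
  have := (hfin.eventually_all).2 key
  filter_upwards [this] with n hn
  exact fun x hx => hn x hx

/-- Every open pure subgroup of `K` is all of `K`. -/
lemma open_pure_eq_top (H : AddSubgroup K) (hopen : IsOpen (H : Set K))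
    (hpure : IsPureSubgroup H) : H = ⊤ := by
  rw [eq_top_iff]
  intro φ _
  have hnhds : (H : Set K) ∈ 𝓝 (0 : K) := hopen.mem_nhds H.zero_mem
  have hev : ∀ᶠ n : ℕ in atTop, (n.factorial • φ : K) ∈ H :=
    (tendsto_factorial_smul φ).eventually_mem hnhds
  obtain ⟨n, hn⟩ := hev.exists
  have hpos : 0 < n.factorial := Nat.factorial_pos n
  have := hpure n.factorial hpos
  have hmem : (n.factorial • φ : K) ∈
      (H : Set K) ∩ ((fun x : K => n.factorial • x) '' (Set.univ : Set K)) :=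
    ⟨hn, ⟨φ, Set.mem_univ φ, rfl⟩⟩
  rw [← this] at hmem
  obtain ⟨h, hhH, hh⟩ := hmem
  have hh' : n.factorial • h = n.factorial • φ := hh
  have : n.factorial • (h - φ) = 0 := by
    rw [smul_sub, hh', sub_self]
  have heq : h - φ = 0 := K_torsionFree hpos this
  have : h = φ := by rwa [sub_eq_zero] at heq
  rwa [← this]

end Aux

/-- The OP subgroup of the Pontryagin dual `K` of discrete `ℚ/ℤ` is all of `K`. -/
theorem opSubgroup_dual_QZ_eq_top : opSubgroup K = ⊤ := by
  rw [eq_top_iff, opSubgroup]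
  refine le_iInf₂ fun H hH => ?_
  rw [open_pure_eq_top H hH.1 hH.2]
end

section
/- Let G be a non-discrete, totally disconnected, torsion-free locally compact abelian group. Then Hom(K, G) ≠ 0, where K is the Pontryagin dual of the discrete abelian group ℚ/ℤ; that is, there exists a nonzero continuous group homomorphism from K to G. -/
/- ### Auxiliary lemmas -/

open Filter Topology Nat

lemma aux_torsion_rep {n : ℕ} (hn : 0 < n) {y : AddCircle (1:ℝ)} (h : n • y = 0) :
    ∃ c : ℤ, y = (((c : ℝ) / (n:ℝ) : ℝ) : AddCircle (1:ℝ)) := by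
  induction y using QuotientAddGroup.induction_on with
  | H r =>
    have h' : ((n • r : ℝ) : AddCircle (1:ℝ)) = 0 := by
      rwa [AddCircle.coe_nsmul]
    rw [AddCircle.coe_eq_zero_iff] at h'
    obtain ⟨m, hm⟩ := h'
    refine ⟨m, ?_⟩
    congr 1
    have hn' : (n:ℝ) ≠ 0 := by positivity
    field_simp
    rw [mul_comm]
    simpa [zsmul_eq_mul, nsmul_eq_mul] using hm.symm

lemma aux_mod {n : ℕ} (hn : 0 < n) {a b : ℤ}
    (h : (((a : ℝ) / (n:ℝ) : ℝ) : AddCircle (1:ℝ)) = (((b : ℝ) / (n:ℝ) : ℝ) : AddCircle (1:ℝ))) :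
    (n:ℤ) ∣ a - b := by
  have h0 : (((a : ℝ)/(n:ℝ) - (b:ℝ)/(n:ℝ) : ℝ) : AddCircle (1:ℝ)) = 0 := by
    rw [AddCircle.coe_sub, h, sub_self]
  rw [AddCircle.coe_eq_zero_iff] at h0
  obtain ⟨m, hm⟩ := h0
  have hn' : (n:ℝ) ≠ 0 := by positivity
  refine ⟨m, ?_⟩
  have : (a : ℝ) - b = (n:ℝ) * m := by
    field_simp [zsmul_eq_mul] at hm
    rw [zsmul_eq_mul, mul_one] at hm; linarith [hm]
  exact_mod_cast this

lemma aux_mod' {n : ℕ} (hn : 0 < n) {a b : ℤ} (h : (n:ℤ) ∣ a - b) :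
    (((a : ℝ) / (n:ℝ) : ℝ) : AddCircle (1:ℝ)) = (((b : ℝ) / (n:ℝ) : ℝ) : AddCircle (1:ℝ)) := by
  obtain ⟨m, hm⟩ := h
  have hn' : (n:ℝ) ≠ 0 := by positivity
  have : (a:ℝ)/(n:ℝ) = (b:ℝ)/(n:ℝ) + m * 1 := by
    have : (a:ℝ) = b + n * m := by exact_mod_cast congrArg (Int.cast : ℤ → ℝ) (by linarith [hm] : a = b + n * m)
    rw [this]; field_simp
  rw [this, AddCircle.coe_add]
  have hz : (((m * 1 : ℝ)) : AddCircle (1:ℝ)) = 0 := by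
    rw [AddCircle.coe_eq_zero_iff]
    exact ⟨m, by simp [zsmul_eq_mul]⟩
  rw [hz, add_zero]

lemma aux_finite (n : ℕ) (hn : 0 < n) : {y : AddCircle (1:ℝ) | n • y = 0}.Finite := by
  apply Set.Finite.subset (Set.finite_range fun k : Fin n => ((((k:ℕ):ℝ) / (n:ℝ) : ℝ) : AddCircle (1:ℝ)))
  intro y hy
  obtain ⟨c, rfl⟩ := aux_torsion_rep hn hy
  have h1 : 0 ≤ c % n := Int.emod_nonneg c (by exact_mod_cast hn.ne')
  have h2 : c % n < n := Int.emod_lt_of_pos c (by exact_mod_cast hn)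
  refine ⟨⟨(c % n).toNat, by omega⟩, ?_⟩
  have : ((((c % n).toNat : ℕ) : ℤ)) = c % n := Int.toNat_of_nonneg h1
  simp only
  rw [show (((( (c % n).toNat :ℕ)):ℝ)) = (((c % n : ℤ)):ℝ) by exact_mod_cast congrArg (Int.cast : ℤ → ℝ) this]
  apply aux_mod' hn
  have h3 : (n:ℤ) ∣ c - c % n := Int.dvd_self_sub_of_emod_eq rfl
  simpa [neg_sub] using dvd_neg.mpr h3

/- ### The elements `1/n!` of `ℚ/ℤ` -/

/-- The element `1/n!` of `ℚ/ℤ`. -/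
def qgen (n : ℕ) : QZ := (QuotientAddGroup.mk (1 / (n ! : ℚ)) : QZ)

lemma qgen_nsmul (n : ℕ) : (n ! : ℕ) • qgen n = 0 := by
  show (n ! : ℕ) • (QuotientAddGroup.mk (1 / (n ! : ℚ)) : ℚ ⧸ AddSubgroup.zmultiples (1 : ℚ)) = 0
  rw [← QuotientAddGroup.mk_nsmul]
  rw [QuotientAddGroup.eq_zero_iff]
  have hne : (n ! : ℚ) ≠ 0 := by exact_mod_cast (Nat.factorial_pos n).ne'
  have : (n ! : ℕ) • (1 / (n ! : ℚ)) = 1 := by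
    rw [nsmul_eq_mul]; field_simp
  rw [this]
  exact ⟨1, by simp⟩

lemma qgen_rel {a n : ℕ} (h : a ≤ n) : (n ! / a !) • qgen n = qgen a := by
  have hd : a ! ∣ n ! := Nat.factorial_dvd_factorial h
  have ht : (a ! * (n ! / a !) : ℕ) = n ! := Nat.mul_div_cancel' hd
  show (n ! / a !) • (QuotientAddGroup.mk (1 / (n ! : ℚ)) : ℚ ⧸ AddSubgroup.zmultiples (1 : ℚ))
      = QuotientAddGroup.mk (1 / (a ! : ℚ))
  rw [← QuotientAddGroup.mk_nsmul]
  congr 1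
  have ha : (a ! : ℚ) ≠ 0 := by exact_mod_cast (Nat.factorial_pos a).ne'
  have hn : (n ! : ℚ) ≠ 0 := by exact_mod_cast (Nat.factorial_pos n).ne'
  have ht' : (a ! : ℚ) * ((n ! / a ! : ℕ) : ℚ) = (n ! : ℚ) := by exact_mod_cast congrArg (Nat.cast : ℕ → ℚ) ht
  rw [nsmul_eq_mul]
  field_simp
  linarith [ht']

/- ### The canonical character `ℚ/ℤ → ℝ/ℤ` -/

/-- The additive hom `ℚ → ℝ/ℤ`. -/
noncomputable def ratToCircle : ℚ →+ AddCircle (1:ℝ) :=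
  (QuotientAddGroup.mk' (AddSubgroup.zmultiples (1:ℝ))).comp (Rat.castHom ℝ).toAddMonoidHom

lemma ratToCircle_ker : AddSubgroup.zmultiples (1 : ℚ) ≤ ratToCircle.ker := by
  intro r hr
  obtain ⟨k, hk⟩ := AddSubgroup.mem_zmultiples_iff.mp hr
  simp only [AddMonoidHom.mem_ker, ratToCircle, AddMonoidHom.comp_apply]
  show ((r : ℝ) : AddCircle (1:ℝ)) = 0
  rw [AddCircle.coe_eq_zero_iff]
  exact ⟨k, by rw [← hk]; push_cast; simp [zsmul_eq_mul]⟩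

/-- The canonical character `ℚ/ℤ → ℝ/ℤ` as a continuous additive monoid hom. -/
noncomputable def chi0 : ContinuousAddMonoidHom QZ (AddCircle (1:ℝ)) :=
  { toAddMonoidHom :=
      (QuotientAddGroup.lift (AddSubgroup.zmultiples (1:ℚ)) ratToCircle ratToCircle_ker :
        (ℚ ⧸ AddSubgroup.zmultiples (1:ℚ)) →+ AddCircle (1:ℝ))
    continuous_toFun := continuous_of_discreteTopology }

lemma chi0_apply_qgen (n : ℕ) :
    chi0 (qgen n) = (((1 : ℝ) / ((n ! : ℕ) : ℝ) : ℝ) : AddCircle (1:ℝ)) := by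
  show ratToCircle (1 / (n ! : ℚ)) = _
  show (((1 / (n ! : ℚ) : ℚ) : ℝ) : AddCircle (1:ℝ)) = _
  congr 1
  push_cast
  ring

set_option maxHeartbeats 1000000 in
/-- A non-discrete, totally disconnected, torsion-free locally compact abelian group `G`
admits a nonzero continuous homomorphism from the Pontryagin dual `K` of discrete
`ℚ/ℤ`, i.e. `Hom(K, G) ≠ 0`. -/
theorem exists_nonzero_hom_of_dual_QZ (G : Type*) [AddCommGroup G]
    [TopologicalSpace G] [IsTopologicalAddGroup G] [LocallyCompactSpace G] [T2Space G]
    (hnd : ¬ DiscreteTopology G) [TotallyDisconnectedSpace G]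
    (htf : ∀ (n : ℕ) (x : G), 0 < n → n • x = 0 → x = 0) :
    ∃ f : ContinuousAddMonoidHom K G, f ≠ 0 := by
  classical

  classical
  obtain ⟨Kc, hKc_comp, hKc_mem⟩ := exists_compact_mem_nhds (0 : G)
  obtain ⟨V, hVclopen, hV0, hVsub⟩ :=
    (loc_compact_Haus_tot_disc_of_zero_dim).mem_nhds_iff.mp (interior_mem_nhds.mpr hKc_mem)
  have hVcomp : IsCompact V :=
    hKc_comp.of_isClosed_subset hVclopen.isClosed (hVsub.trans interior_subset)
  obtain ⟨W, hW_mem, hVW⟩ :=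
    compact_open_separated_add_right hVcomp hVclopen.isOpen (subset_refl V)
  have hWneg : (W ∩ -W) ∈ 𝓝 (0 : G) := by
    refine inter_mem hW_mem ?_
    have h := (continuous_neg (G := G)).continuousAt (x := (0:G)) |>.preimage_mem_nhds
      (by rw [neg_zero]; exact hW_mem)
    have he : (Neg.neg ⁻¹' W : Set G) = -W := rfl
    rwa [he] at h
  -- find nonzero x in W ∩ -W
  have hx_ex : ∃ x : G, x ∈ W ∩ -W ∧ x ≠ 0 := by
    by_contra hcon
    push_neg at hcon
    have hsub : W ∩ -W ⊆ {0} := fun g hg => hcon g hg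
    have : IsOpen ({0} : Set G) := by
      have h0i : (0:G) ∈ interior (W ∩ -W) := mem_interior_iff_mem_nhds.mpr hWneg
      have : interior (W ∩ -W) = {0} := by
        apply Set.Subset.antisymm ((interior_subset).trans hsub)
        intro g hg; rw [Set.mem_singleton_iff] at hg; subst hg; exact h0i
      rw [← this]; exact isOpen_interior
    exact hnd (discreteTopology_of_isOpen_singleton_zero this)
  obtain ⟨x, ⟨hxW, hxWneg⟩, hx0⟩ := hx_ex
  have hxnegW : -x ∈ W := Set.mem_neg.mp hxWneg
  -- all integer multiples of x lie in V
  have hnat : ∀ g : G, g ∈ W → ∀ n : ℕ, n • g ∈ V := by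
    intro g hg n
    induction n with
    | zero => simpa using hV0
    | succ k ih => rw [succ_nsmul]; exact hVW (Set.add_mem_add ih hg)
  have hint : ∀ m : ℤ, m • x ∈ V := by
    intro m
    obtain ⟨n, rfl | rfl⟩ := m.eq_nat_or_neg
    · rw [natCast_zsmul]; exact hnat x hxW n
    · have : (-(n:ℤ)) • x = (n:ℤ) • (-x) := by rw [neg_zsmul, zsmul_neg]
      rw [this, natCast_zsmul]; exact hnat (-x) hxnegW n
  -- the closure S of the cyclic subgroup generated by x
  set S : AddSubgroup G := (AddSubgroup.zmultiples x).topologicalClosure with hSdef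
  have hxS : x ∈ S := AddSubgroup.le_topologicalClosure _ (AddSubgroup.mem_zmultiples x)
  have hSV : (S : Set G) ⊆ V := by
    rw [hSdef, AddSubgroup.topologicalClosure_coe]
    apply closure_minimal _ hVclopen.isClosed
    intro g hg
    obtain ⟨m, hm⟩ := AddSubgroup.mem_zmultiples_iff.mp hg
    rw [← hm]; exact hint m
  have hScomp : IsCompact (S : Set G) :=
    hVcomp.of_isClosed_subset (AddSubgroup.isClosed_topologicalClosure _) hSV
  haveI : CompactSpace S := isCompact_iff_compactSpace.mp hScomp
  -- key lemma: every neighborhood of 0 contains a useful closed subgroup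
  have lemA : ∀ V' ∈ 𝓝 (0:G), ∃ U : AddSubgroup G, (U : Set G) ⊆ V' ∧ IsClosed (U : Set G) ∧
      ∃ d : ℕ, 0 < d ∧ ∀ t : ℤ, (d:ℤ) ∣ t → t • x ∈ U := by
    intro V' hV'
    have hpre : ((↑) : S → G) ⁻¹' V' ∈ 𝓝 (0 : S) :=
      (continuous_subtype_val.continuousAt).preimage_mem_nhds (by simpa using hV')
    obtain ⟨W0, ⟨hW00, hW0clopen⟩, hW0sub⟩ := (nhds_basis_clopen (0 : S)).mem_iff.mp hpre
    obtain ⟨H, hHsub⟩ :=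
      IsTopologicalAddGroup.exist_openAddSubgroup_sub_clopen_nhds_of_zero hW0clopen hW00
    haveI hfin : Finite (S ⧸ H.toAddSubgroup) :=
      AddSubgroup.quotient_finite_of_isOpen H.toAddSubgroup H.isOpen
    haveI : H.toAddSubgroup.FiniteIndex := AddSubgroup.finiteIndex_of_finite_quotient (H := H.toAddSubgroup)
    set d := H.toAddSubgroup.index with hd
    refine ⟨H.toAddSubgroup.map S.subtype, ?_, ?_, d, ?_, ?_⟩
    · rintro g hg
      rw [AddSubgroup.coe_map] at hg
      obtain ⟨s, hs, rfl⟩ := hg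
      exact hW0sub (hHsub hs)
    · have hHcl : IsClosed (H.toAddSubgroup : Set S) := H.isClosed
      have hHcomp : IsCompact (H.toAddSubgroup : Set S) := hHcl.isCompact
      have : IsCompact ((H.toAddSubgroup.map S.subtype : AddSubgroup G) : Set G) := by
        have := hHcomp.image (continuous_subtype_val (p := fun g => g ∈ S))
        simpa [AddSubgroup.coe_map] using this
      exact this.isClosed
    · exact Nat.pos_of_ne_zero AddSubgroup.FiniteIndex.index_ne_zero
    · intro t ht
      obtain ⟨u, rfl⟩ := ht
      have hz : d • (⟨x, hxS⟩ : S) ∈ H.toAddSubgroup :=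
        AddSubgroup.nsmul_index_mem H.toAddSubgroup _
      have hz2 : u • (d • (⟨x, hxS⟩ : S)) ∈ H.toAddSubgroup :=
        AddSubgroup.zsmul_mem _ hz u
      refine AddSubgroup.mem_map.mpr ⟨_, hz2, ?_⟩
      show ((u • (d • (⟨x, hxS⟩ : S)) : S) : G) = ((d:ℤ) * u) • x
      push_cast
      rw [mul_comm, mul_zsmul]
      norm_cast

  clear htf
  -- choose integer representatives for the values of characters at `1/n!`
  have hc : ∀ (χ : ContinuousAddMonoidHom QZ (AddCircle (1:ℝ))) (n : ℕ),
      ∃ cc : ℤ, χ (qgen n) = (((cc : ℝ) / ((n ! : ℕ) : ℝ) : ℝ) : AddCircle (1:ℝ)) := by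
    intro χ n
    apply aux_torsion_rep (Nat.factorial_pos n)
    rw [← map_nsmul, qgen_nsmul, map_zero]
  choose c hcspec using hc
  -- congruence along factorials
  have hcong : ∀ (χ : ContinuousAddMonoidHom QZ (AddCircle (1:ℝ))) {a n : ℕ}, a ≤ n →
      ((a ! : ℕ) : ℤ) ∣ c χ n - c χ a := by
    intro χ a n h
    have ha : ((a ! : ℕ) : ℝ) ≠ 0 := by exact_mod_cast (Nat.factorial_pos a).ne'
    have hn : ((n ! : ℕ) : ℝ) ≠ 0 := by exact_mod_cast (Nat.factorial_pos n).ne'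
    have h1 : χ (qgen a) = (n ! / a !) • χ (qgen n) := by rw [← map_nsmul, qgen_rel h]
    rw [hcspec χ a, hcspec χ n] at h1
    have h2 : ((n ! / a !) : ℕ) • ((((c χ n : ℤ) : ℝ) / ((n ! : ℕ):ℝ) : ℝ) : AddCircle (1:ℝ))
        = ((((c χ n : ℤ) : ℝ) / ((a ! : ℕ):ℝ) : ℝ) : AddCircle (1:ℝ)) := by
      rw [← AddCircle.coe_nsmul]
      congr 1
      have ht : ((a ! * (n ! / a !) : ℕ) : ℝ) = ((n ! : ℕ) : ℝ) := by
        exact_mod_cast congrArg (Nat.cast : ℕ → ℝ) (Nat.mul_div_cancel' (Nat.factorial_dvd_factorial h))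
      rw [nsmul_eq_mul]
      field_simp
      rw [← ht]
      push_cast
      ring
    rw [h2] at h1
    exact aux_mod (Nat.factorial_pos a) h1.symm
  -- additivity congruence
  have haddc : ∀ χ ψ : ContinuousAddMonoidHom QZ (AddCircle (1:ℝ)), ∀ n : ℕ,
      ((n ! : ℕ):ℤ) ∣ (c (χ + ψ) n - (c χ n + c ψ n)) := by
    intro χ ψ n
    apply aux_mod (Nat.factorial_pos n)
    have h1 : (χ + ψ) (qgen n) = χ (qgen n) + ψ (qgen n) := rfl
    rw [hcspec, hcspec, hcspec, ← AddCircle.coe_add] at h1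
    rw [h1]
    congr 1
    push_cast
    ring
  -- the canonical character has representatives ≡ 1
  have hone : ∀ n : ℕ, ((n ! : ℕ):ℤ) ∣ c chi0 n - 1 := by
    intro n
    apply aux_mod (Nat.factorial_pos n)
    rw [← hcspec chi0 n, chi0_apply_qgen]
    congr 1
    push_cast
    ring
  -- existence of limits
  have key : ∀ χ : ContinuousAddMonoidHom QZ (AddCircle (1:ℝ)),
      ∃ L : G, Tendsto (fun n => c χ n • x) atTop (𝓝 L) := by
    intro χ
    set y : ℕ → G := fun n => c χ n • x with hy
    have hyS : ∀ n, y n ∈ (S : Set G) := fun n => S.zsmul_mem hxS _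
    haveI hne : (Filter.map y atTop).NeBot := Filter.map_neBot
    have hle : Filter.map y atTop ≤ 𝓟 (S : Set G) :=
      le_principal_iff.mpr (Filter.mem_map.mpr (Eventually.of_forall hyS))
    obtain ⟨L, hLS, hcl⟩ := hScomp hle
    refine ⟨L, ?_⟩
    rw [tendsto_def]
    intro Wn hWn
    have hV' : (fun u : G => u + L) ⁻¹' Wn ∈ 𝓝 (0:G) := by
      have hcontn : Continuous (fun u : G => u + L) := continuous_id.add continuous_const
      exact hcontn.continuousAt (x := (0:G)) |>.preimage_mem_nhds (by rwa [zero_add])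
    obtain ⟨U, hUsub, hUclosed, d, hd, hdU⟩ := lemA _ hV'
    have htail : ∀ n, d ≤ n → y n - y d ∈ U := by
      intro n hn
      have h2 : (d:ℤ) ∣ c χ n - c χ d :=
        dvd_trans (Int.natCast_dvd_natCast.mpr (Nat.dvd_factorial hd le_rfl)) (hcong χ hn)
      have h3 := hdU _ h2
      rw [sub_zsmul] at h3
      simpa [hy, sub_eq_add_neg] using h3
    have hLco : L - y d ∈ U := by
      have hTmem : {g : G | g - y d ∈ U} ∈ Filter.map y atTop := by
        apply Filter.mem_map.mpr
        filter_upwards [eventually_ge_atTop d] with n hn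
        exact htail n hn
      have hTclosed : IsClosed {g : G | g - y d ∈ U} :=
        hUclosed.preimage (continuous_id.sub continuous_const)
      have hcp : ClusterPt L (𝓟 {g : G | g - y d ∈ U}) :=
        hcl.mono (le_principal_iff.mpr hTmem)
      exact hTclosed.closure_subset (mem_closure_iff_clusterPt.mpr hcp)
    filter_upwards [eventually_ge_atTop d] with n hn
    have hyn : y n - L ∈ U := by
      have hs := U.sub_mem (htail n hn) hLco
      rwa [sub_sub_sub_cancel_right] at hs
    have hfin := hUsub hyn
    have : (y n - L) + L ∈ Wn := hfin
    simpa using this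
  choose f₀ hf₀ using key
  -- sequences with highly divisible coefficients tend to zero
  have tend0 : ∀ e : ℕ → ℤ, (∀ n, ((n ! :ℕ):ℤ) ∣ e n) →
      Tendsto (fun n => e n • x) atTop (𝓝 (0:G)) := by
    intro e he
    rw [tendsto_def]
    intro Wn hWn
    obtain ⟨U, hUsub, hUclosed, d, hd, hdU⟩ := lemA Wn hWn
    filter_upwards [eventually_ge_atTop d] with n hn
    apply hUsub
    apply hdU
    exact dvd_trans (Int.natCast_dvd_natCast.mpr
      (dvd_trans (Nat.dvd_factorial hd le_rfl) (Nat.factorial_dvd_factorial hn))) (he n)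
  -- additivity of the limit function
  have hadd : ∀ χ ψ : ContinuousAddMonoidHom QZ (AddCircle (1:ℝ)),
      f₀ (χ + ψ) = f₀ χ + f₀ ψ := by
    intro χ ψ
    have h1 : Tendsto (fun n => (c (χ+ψ) n - (c χ n + c ψ n)) • x) atTop (𝓝 (0:G)) :=
      tend0 _ (haddc χ ψ)
    have h2 : Tendsto (fun n => c χ n • x + c ψ n • x) atTop (𝓝 (f₀ χ + f₀ ψ)) :=
      (hf₀ χ).add (hf₀ ψ)
    have h3 : Tendsto (fun n => c (χ+ψ) n • x) atTop (𝓝 (0 + (f₀ χ + f₀ ψ))) := by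
      refine (h1.add h2).congr fun n => ?_
      rw [sub_zsmul, add_zsmul]
      abel
    have h4 := tendsto_nhds_unique (hf₀ (χ+ψ)) h3
    rwa [zero_add] at h4
  -- the value at the canonical character is x
  have hchi0 : f₀ chi0 = x := by
    have h1 : Tendsto (fun n => (c chi0 n - 1) • x) atTop (𝓝 (0:G)) := tend0 _ hone
    have h2 : Tendsto (fun n => c chi0 n • x) atTop (𝓝 (0 + x)) := by
      refine (h1.add tendsto_const_nhds).congr fun n => ?_
      rw [sub_zsmul, one_zsmul]
      abel
    have h3 := tendsto_nhds_unique (hf₀ chi0) h2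
    rwa [zero_add] at h3
  -- continuity of the limit function
  have hcont : Continuous f₀ := by
    rw [continuous_iff_continuousAt]
    intro χ
    rw [ContinuousAt, tendsto_def]
    intro Wn hWn
    have hV' : (fun u : G => u + f₀ χ) ⁻¹' Wn ∈ 𝓝 (0:G) := by
      have hcontn : Continuous (fun u : G => u + f₀ χ) := continuous_id.add continuous_const
      exact hcontn.continuousAt (x := (0:G)) |>.preimage_mem_nhds (by rwa [zero_add])
    obtain ⟨U, hUsub, hUclosed, d, hd, hdU⟩ := lemA _ hV'
    have hTfin : {z : AddCircle (1:ℝ) | (d ! : ℕ) • z = 0}.Finite :=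
      aux_finite _ (Nat.factorial_pos d)
    have hmemT : ∀ ψ : ContinuousAddMonoidHom QZ (AddCircle (1:ℝ)),
        ψ (qgen d) ∈ {z : AddCircle (1:ℝ) | (d ! : ℕ) • z = 0} := by
      intro ψ
      show (d ! : ℕ) • ψ (qgen d) = 0
      rw [← map_nsmul, qgen_nsmul, map_zero]
    have hBopen : IsOpen (({z : AddCircle (1:ℝ) | (d ! : ℕ) • z = 0} \ {χ (qgen d)})ᶜ) :=
      ((hTfin.subset Set.diff_subset).isClosed).isOpen_compl
    have hNmem : {ψ : ContinuousAddMonoidHom QZ (AddCircle (1:ℝ)) |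
        ψ (qgen d) = χ (qgen d)} ∈ 𝓝 χ := by
      have hev : Continuous (fun ψ : ContinuousAddMonoidHom QZ (AddCircle (1:ℝ)) =>
          ψ (qgen d)) := continuous_eval_const (qgen d)
      have hxB : χ (qgen d) ∈ ({z : AddCircle (1:ℝ) | (d ! : ℕ) • z = 0} \ {χ (qgen d)})ᶜ := by
        simp
      have hpre := (hev.continuousAt (x := χ)).preimage_mem_nhds (hBopen.mem_nhds hxB)
      filter_upwards [hpre] with ψ hψ
      by_contra hne
      exact hψ ⟨hmemT ψ, by simpa using hne⟩
    filter_upwards [hNmem] with ψ hψ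
    have hψeq : ψ (qgen d) = χ (qgen d) := hψ
    have hdiff : ∀ n, d ≤ n → ((d ! : ℕ):ℤ) ∣ c ψ n - c χ n := by
      intro n hn
      have h1 : ((d ! : ℕ):ℤ) ∣ c ψ d - c χ d := by
        apply aux_mod (Nat.factorial_pos d)
        rw [← hcspec ψ d, ← hcspec χ d, hψeq]
      have h2 := hcong ψ hn
      have h3 := hcong χ hn
      have h4 := dvd_sub (dvd_add h2 h1) h3
      have he : (c ψ n - c ψ d) + (c ψ d - c χ d) - (c χ n - c χ d) = c ψ n - c χ n := by ring
      rwa [he] at h4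
    have hUd : f₀ ψ - f₀ χ ∈ U := by
      have htt : Tendsto (fun n => (c ψ n - c χ n) • x) atTop (𝓝 (f₀ ψ - f₀ χ)) :=
        ((hf₀ ψ).sub (hf₀ χ)).congr fun n => by rw [sub_zsmul, sub_eq_add_neg]
      apply hUclosed.mem_of_tendsto htt
      filter_upwards [eventually_ge_atTop d] with n hn
      exact hdU _ (dvd_trans (Int.natCast_dvd_natCast.mpr
        (Nat.dvd_factorial hd le_rfl)) (hdiff n hn))
    have hfin := hUsub hUd
    have : (f₀ ψ - f₀ χ) + f₀ χ ∈ Wn := hfin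
    simpa using this
  -- assemble the continuous homomorphism
  refine ⟨⟨AddMonoidHom.mk' f₀ hadd, hcont⟩, ?_⟩
  intro hzero
  have h2 := congrArg (fun g : ContinuousAddMonoidHom K G => g.toAddMonoidHom chi0) hzero
  have hL : (⟨AddMonoidHom.mk' f₀ hadd, hcont⟩ :
      ContinuousAddMonoidHom K G).toAddMonoidHom chi0 = f₀ chi0 := rfl
  have hR : (0 : ContinuousAddMonoidHom K G).toAddMonoidHom chi0 = 0 := rfl
  simp only at h2
  rw [hL, hR, hchi0] at h2
  exact hx0 h2
end
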